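/- arXiv:2412.11485 — 7 statements merged into one kernel-verified Lean document; each statement's English description precedes it below -/
import Mathlib

section
/- Let f : ℝ^d → ℝ, let x^k, x^{k+1}, y^k ∈ ℝ^d, let α_k ∈ (0,1] and t_k, t_{k+1} > 0, and suppose x^{k+1} = α_k y^k + (1 − α_k) x^k. If x̂^k is a global minimizer of z ↦ f(z) + ‖z − x^k‖²/(2t_k) and x̂^{k+1} is a global minimizer of z ↦ f(z) + ‖z − x^{k+1}‖²/(2t_{k+1}), then f(x̂^{k+1}) − f(x̂^k) ≤ (1/(2t_{k+1})) · ( α_k ‖x̂^k − y^k‖² + (1 − α_k) ‖x̂^k − x^k‖² − ‖x̂^{k+1} − x^{k+1}‖² ). -/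
/-! Test the prox objective at `x̂^{k+1}` against the competitor `x̂^k`, then bound
`‖x̂^k - x^{k+1}‖²` by convexity of `‖·‖²`, since `x̂^k - x^{k+1}` is the convex combination
`α_k (x̂^k - y^k) + (1 - α_k) (x̂^k - x^k)`. -/

theorem norm_smul_add_one_sub_smul_sq_le {E : Type*} [SeminormedAddCommGroup E]
    [NormedSpace ℝ E] (u v : E) {a : ℝ} (ha₀ : 0 ≤ a) (ha₁ : a ≤ 1) :
    ‖a • u + (1 - a) • v‖ ^ 2 ≤ a * ‖u‖ ^ 2 + (1 - a) * ‖v‖ ^ 2 :=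
  (convexOn_univ_norm.pow (fun _ _ ↦ norm_nonneg _) 2).2 trivial trivial ha₀ (by linarith)
    (by ring)

theorem ipp_descent_step_general {d : ℕ} (f : EuclideanSpace ℝ (Fin d) → ℝ)
    (xk xk1 yk xhatk xhatk1 : EuclideanSpace ℝ (Fin d))
    (αk tk1 : ℝ) (hα0 : 0 < αk) (hα1 : αk ≤ 1) (htk1 : 0 < tk1)
    (hupd : xk1 = αk • yk + (1 - αk) • xk)
    (hmin_k1 : ∀ z, f xhatk1 + ‖xhatk1 - xk1‖ ^ 2 / (2 * tk1)
      ≤ f z + ‖z - xk1‖ ^ 2 / (2 * tk1)) :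
    f xhatk1 - f xhatk ≤ (1 / (2 * tk1)) *
      (αk * ‖xhatk - yk‖ ^ 2 + (1 - αk) * ‖xhatk - xk‖ ^ 2 - ‖xhatk1 - xk1‖ ^ 2) := by
  have hdecomp : xhatk - xk1 = αk • (xhatk - yk) + (1 - αk) • (xhatk - xk) := by
    rw [hupd]; module
  have hconv : ‖xhatk - xk1‖ ^ 2 ≤ αk * ‖xhatk - yk‖ ^ 2 + (1 - αk) * ‖xhatk - xk‖ ^ 2 :=
    hdecomp ▸ norm_smul_add_one_sub_smul_sq_le _ _ hα0.le hα1
  calc f xhatk1 - f xhatk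
      ≤ (‖xhatk - xk1‖ ^ 2 - ‖xhatk1 - xk1‖ ^ 2) / (2 * tk1) := by
        rw [sub_div]; linarith [hmin_k1 xhatk]
    _ ≤ (αk * ‖xhatk - yk‖ ^ 2 + (1 - αk) * ‖xhatk - xk‖ ^ 2 - ‖xhatk1 - xk1‖ ^ 2)
        / (2 * tk1) := by gcongr
    _ = _ := one_div_mul_eq_div _ _ |>.symm

/-- One-step descent inequality for inexact proximal point iterations:
if `x^{k+1} = α_k y^k + (1 - α_k) x^k`, `x̂^k ∈ prox_{t_k f}(x^k)` and
`x̂^{k+1} ∈ prox_{t_{k+1} f}(x^{k+1})`, then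
`f(x̂^{k+1}) - f(x̂^k) ≤ (1/(2 t_{k+1})) (α_k ‖x̂^k - y^k‖² + (1-α_k) ‖x̂^k - x^k‖²
  - ‖x̂^{k+1} - x^{k+1}‖²)`. -/
theorem ipp_descent_step {d : ℕ} (f : EuclideanSpace ℝ (Fin d) → ℝ)
    (xk xk1 yk xhatk xhatk1 : EuclideanSpace ℝ (Fin d))
    (αk tk tk1 : ℝ) (hα0 : 0 < αk) (hα1 : αk ≤ 1) (htk : 0 < tk) (htk1 : 0 < tk1)
    (hupd : xk1 = αk • yk + (1 - αk) • xk)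
    (hmin_k : ∀ z, f xhatk + ‖xhatk - xk‖ ^ 2 / (2 * tk) ≤ f z + ‖z - xk‖ ^ 2 / (2 * tk))
    (hmin_k1 : ∀ z, f xhatk1 + ‖xhatk1 - xk1‖ ^ 2 / (2 * tk1)
      ≤ f z + ‖z - xk1‖ ^ 2 / (2 * tk1)) :
    f xhatk1 - f xhatk ≤ (1 / (2 * tk1)) *
      (αk * ‖xhatk - yk‖ ^ 2 + (1 - αk) * ‖xhatk - xk‖ ^ 2 - ‖xhatk1 - xk1‖ ^ 2) :=
  ipp_descent_step_general f xk xk1 yk xhatk xhatk1 αk tk1 hα0 hα1 htk1 hupd hmin_k1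
end

section
/- Let f : ℝ^d → ℝ be bounded below. Let 0 < τ ≤ T, 0 < η_− < 1, and [α_min, α_max] ⊆ (0,1] with α_min > 1 − η_−. Let sequences (x^k), (y^k), (x̂^k) in ℝ^d, (t_k) in [τ, T] and (α_k) in [α_min, α_max] satisfy, for all k ≥ 0: x̂^k ∈ prox_{t_k f}(x^k), x^{k+1} = α_k y^k + (1 − α_k) x^k, and t_{k+1} ≥ η_− t_k. If ∑_{k=0}^∞ ‖y^k − x̂^k‖² < ∞, then ∑_{k=0}^∞ ‖x̂^k − x^k‖² < ∞. -/
set_option maxHeartbeats 1000000 in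
/-- For `f : ℝ^d → ℝ` bounded below, parameters `0 < τ ≤ T`,
`0 < η₋ < 1`, `[αmin, αmax] ⊆ (0,1]` with `αmin > 1 - η₋`, if the sequences satisfy
`x̂^k ∈ prox_{t_k f}(x^k)`, `x^{k+1} = α_k y^k + (1-α_k) x^k`, `t_{k+1} ≥ η₋ t_k`,
`t_k ∈ [τ,T]`, `α_k ∈ [αmin, αmax]`, and `∑ ‖y^k - x̂^k‖² < ∞`, then
`∑ ‖x̂^k - x^k‖² < ∞`. -/
theorem ipp_summable_prox_error {d : ℕ} (f : EuclideanSpace ℝ (Fin d) → ℝ)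
    (B : ℝ) (hbdd : ∀ z, B ≤ f z)
    (τ T ηm αmin αmax : ℝ)
    (hτ : 0 < τ) (hτT : τ ≤ T) (hηm0 : 0 < ηm) (hηm1 : ηm < 1)
    (hαmin0 : 0 < αmin) (hαminmax : αmin ≤ αmax) (hαmax1 : αmax ≤ 1)
    (hαη : 1 - ηm < αmin)
    (x y xhat : ℕ → EuclideanSpace ℝ (Fin d)) (t α : ℕ → ℝ)
    (ht : ∀ k, t k ∈ Set.Icc τ T) (hα : ∀ k, α k ∈ Set.Icc αmin αmax)
    (hprox : ∀ k, ∀ z, f (xhat k) + ‖xhat k - x k‖ ^ 2 / (2 * t k)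
      ≤ f z + ‖z - x k‖ ^ 2 / (2 * t k))
    (hupd : ∀ k, x (k + 1) = α k • y k + (1 - α k) • x k)
    (htstep : ∀ k, ηm * t k ≤ t (k + 1))
    (hsum : Summable (fun k => ‖y k - xhat k‖ ^ 2)) :
    Summable (fun k => ‖xhat k - x k‖ ^ 2) := by
  set e : ℕ → ℝ := fun k => ‖xhat k - x k‖ with he
  set g : ℕ → ℝ := fun k => ‖y k - xhat k‖ with hg
  set F : ℕ → ℝ := fun k => f (xhat k) + e k ^ 2 / (2 * t k) with hF
  set c : ℝ := (αmin - (1 - ηm)) / (2 * ηm * T) with hc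
  set C : ℝ := 1 / (2 * ηm * τ) with hCdef
  clear_value e g F c C
  have hT : 0 < T := lt_of_lt_of_le hτ hτT
  have hc0 : 0 < c := by
    rw [hc]; exact div_pos (by linarith) (by positivity)
  have htk : ∀ k, 0 < t k := fun k => lt_of_lt_of_le hτ (ht k).1
  -- key per-step inequality
  have key : ∀ k, c * e k ^ 2 ≤ F k - F (k + 1) + C * g k ^ 2 := by
    intro k
    have hαka : αmin ≤ α k := (hα k).1
    have hαk0 : 0 < α k := lt_of_lt_of_le hαmin0 hαka
    have hαk1 : α k ≤ 1 := le_trans (hα k).2 hαmax1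
    have htka : τ ≤ t k := (ht k).1
    have htkb : t k ≤ T := (ht k).2
    have htk0 : 0 < t k := htk k
    have hxeq : x (k + 1) - xhat k
        = α k • (y k - xhat k) + (1 - α k) • (x k - xhat k) := by
      rw [hupd k]; module
    have hnorm : ‖x (k + 1) - xhat k‖ ≤ α k * g k + (1 - α k) * e k := by
      rw [hxeq]
      refine le_trans (norm_add_le _ _) ?_
      rw [norm_smul, norm_smul, Real.norm_of_nonneg hαk0.le,
        Real.norm_of_nonneg (by linarith), norm_sub_rev (x k)]
      simp only [hg, he]
      exact le_rfl
    have hnormsq : ‖x (k + 1) - xhat k‖ ^ 2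
        ≤ α k * g k ^ 2 + (1 - α k) * e k ^ 2 := by
      have h0 : (0:ℝ) ≤ ‖x (k + 1) - xhat k‖ := norm_nonneg _
      have hg0 : (0:ℝ) ≤ g k := by simp only [hg]; positivity
      have he0 : (0:ℝ) ≤ e k := by simp only [he]; positivity
      nlinarith [sq_nonneg (g k - e k), mul_nonneg hαk0.le (sub_nonneg.2 hαk1)]
    have ht1 : 0 < t (k + 1) := htk (k + 1)
    have hstep : F (k + 1) ≤ f (xhat k)
        + (α k * g k ^ 2 + (1 - α k) * e k ^ 2) / (2 * (ηm * t k)) := by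
      have h1 := hprox (k + 1) (xhat k)
      have h2 : ‖xhat k - x (k + 1)‖ ^ 2 / (2 * t (k + 1))
          ≤ (α k * g k ^ 2 + (1 - α k) * e k ^ 2) / (2 * (ηm * t k)) := by
        rw [norm_sub_rev]
        apply div_le_div₀ (by nlinarith [sq_nonneg (g k), sq_nonneg (e k)])
          hnormsq (by positivity) (by nlinarith [htstep k])
      calc F (k + 1) ≤ f (xhat k) + ‖xhat k - x (k + 1)‖ ^ 2 / (2 * t (k + 1)) := by
            simp only [hF, he]; exact h1
        _ ≤ _ := by linarith
    -- now combine
    have hA : c * e k ^ 2 ≤ (ηm - (1 - α k)) * e k ^ 2 / (2 * (ηm * t k)) := by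
      rw [hc, div_mul_eq_mul_div]
      apply div_le_div₀ (by nlinarith [sq_nonneg (e k)])
        (by nlinarith [sq_nonneg (e k)]) (by positivity)
        (by nlinarith)
    have hB : α k * g k ^ 2 / (2 * (ηm * t k)) ≤ C * g k ^ 2 := by
      have hCg : C * g k ^ 2 = 1 * g k ^ 2 / (2 * (ηm * τ)) := by
        rw [hCdef]; ring
      rw [hCg]
      apply div_le_div₀ (by positivity) (by nlinarith [sq_nonneg (g k)])
        (by positivity) (by nlinarith)
    have hsplit : e k ^ 2 / (2 * t k)
        - (α k * g k ^ 2 + (1 - α k) * e k ^ 2) / (2 * (ηm * t k))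
        = (ηm - (1 - α k)) * e k ^ 2 / (2 * (ηm * t k))
          - α k * g k ^ 2 / (2 * (ηm * t k)) := by
      field_simp
      ring
    have hFkdef : F k = f (xhat k) + e k ^ 2 / (2 * t k) := by rw [hF]
    have hFk : e k ^ 2 / (2 * t k)
        - (α k * g k ^ 2 + (1 - α k) * e k ^ 2) / (2 * (ηm * t k))
        ≤ F k - F (k + 1) := by linarith
    rw [hsplit] at hFk
    nlinarith [hA, hB, hFk]
  -- telescoping bound on partial sums
  have hFB : ∀ n, B ≤ F n := by
    intro n
    have : 0 ≤ e n ^ 2 / (2 * t n) :=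
      div_nonneg (sq_nonneg _) (by linarith [htk n])
    have := hbdd (xhat n)
    simp only [hF]; linarith
  have hgS : ∀ n, ∑ i ∈ Finset.range n, g i ^ 2 ≤ ∑' i, g i ^ 2 := by
    intro n
    exact Summable.sum_le_tsum _ (fun i _ => by positivity)
      (by simpa only [hg] using hsum)
  have hbound : ∀ n, ∑ i ∈ Finset.range n, c * e i ^ 2
      ≤ F 0 - B + C * ∑' i, g i ^ 2 := by
    intro n
    have h1 : ∑ i ∈ Finset.range n, c * e i ^ 2
        ≤ ∑ i ∈ Finset.range n, (F i - F (i + 1) + C * g i ^ 2) :=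
      Finset.sum_le_sum (fun i _ => key i)
    have h2 : ∑ i ∈ Finset.range n, (F i - F (i + 1) + C * g i ^ 2)
        = (F 0 - F n) + C * ∑ i ∈ Finset.range n, g i ^ 2 := by
      rw [Finset.sum_add_distrib, Finset.sum_range_sub' F, ← Finset.mul_sum]
    have hC0 : 0 ≤ C := by rw [hCdef]; positivity
    have := mul_le_mul_of_nonneg_left (hgS n) hC0
    have := hFB n
    linarith
  have hcsum : Summable (fun k => c * e k ^ 2) :=
    summable_of_sum_range_le (fun n => mul_nonneg hc0.le (sq_nonneg _)) hbound
  have h2 : Summable (fun k => e k ^ 2) := by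
    have := hcsum.mul_left c⁻¹
    simpa [← mul_assoc, inv_mul_cancel₀ hc0.ne'] using this
  simpa only [he] using h2
end

section
/- Let f : ℝ^d → ℝ be continuous and p-coercive for some p > 0, with a unique global minimizer x*. Suppose f is twice continuously differentiable on a neighborhood U of x* and x* is nondegenerate (the Hessian ∇²f(x*) is nonsingular). Then for every x ∈ ℝ^d there exists t_0 > 0 such that for all t ≥ t_0, the set prox_{tf}(x) is a singleton. -/
/-!
A prox point `z` of `f` at `x` satisfies `‖z - x‖ ≤ ‖x* - x‖` and
`f z ≤ f x* + ‖x* - x‖² / (2t)`. Since `f` is bounded away from `f x*` on compact sets avoiding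
the unique minimizer `x*`, for large `t` all prox points lie in a small ball around `x*`.
On such a ball the Hessian is positive semidefinite: at `x*` it is semidefinite (second-order
condition), symmetric and nonsingular, hence positive definite, and it is continuous. So `∇f` is
monotone on the ball, while two prox points `y, z` are stationary, `∇f y = -(y - x) / t`, giving
`0 ≤ ⟪∇f y - ∇f z, y - z⟫ = -‖y - z‖² / t` and `y = z`. Existence holds because `f` is bounded
below.
-/

open Filter Metric Set Topology

theorem IsLocalMin.deriv_deriv_nonneg {g : ℝ → ℝ} {a : ℝ} (h : IsLocalMin g a)
    (hg : ContinuousAt g a) : 0 ≤ deriv (deriv g) a := by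
  by_contra! hneg
  -- By the second derivative test `a` would also be a local maximum, so `g` is locally constant.
  have hmax := isLocalMax_of_deriv_deriv_neg hneg h.deriv_eq_zero hg
  have hconst : deriv g =ᶠ[𝓝 a] fun _ => 0 := by
    have : g =ᶠ[𝓝 a] fun _ => g a := by
      filter_upwards [h, hmax] with b hmin hmax using le_antisymm hmax hmin
    filter_upwards [this.eventuallyEq_nhds] with b hb
    rw [hb.deriv_eq, deriv_const]
  rw [hconst.deriv_eq, deriv_const] at hneg
  exact hneg.false

section NormedSpace

variable {E : Type*} [NormedAddCommGroup E] [NormedSpace ℝ E]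

theorem IsLocalMin.fderiv_fderiv_apply_self_nonneg {f : E → ℝ} {x : E} (h : IsLocalMin f x)
    (hf : ∀ᶠ y in 𝓝 x, DifferentiableAt ℝ f y) (hf' : DifferentiableAt ℝ (fderiv ℝ f) x)
    (v : E) : 0 ≤ fderiv ℝ (fderiv ℝ f) x v v := by
  set line : ℝ → E := fun s => x + s • v
  have hline : ∀ s, HasDerivAt line v s := fun s => by
    have := ((hasDerivAt_id s).smul_const v).const_add x
    rwa [one_smul] at this
  have hline0 : line 0 = x := by simp [line]
  have hT : Tendsto line (𝓝 0) (𝓝 x) := hline0 ▸ (hline 0).continuousAt.tendsto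
  have hmin : IsLocalMin (f ∘ line) 0 := by
    filter_upwards [hT.eventually h] with s hs
    simpa [hline0] using hs
  have hderiv : deriv (f ∘ line) =ᶠ[𝓝 0] fun s => fderiv ℝ f (line s) v := by
    filter_upwards [hT.eventually hf] with s hs
    exact (hs.hasFDerivAt.comp_hasDerivAt s (hline s)).deriv
  have hsecond : HasDerivAt (fun s => fderiv ℝ f (line s) v) (fderiv ℝ (fderiv ℝ f) x v v) 0 := by
    simpa using (hf'.hasFDerivAt.comp_hasDerivAt_of_eq 0 (hline 0) hline0.symm).clm_apply
      (hasDerivAt_const 0 v)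
  have hcont : ContinuousAt (f ∘ line) 0 :=
    (hline0 ▸ hf.self_of_nhds.continuousAt).comp (hline 0).continuousAt
  simpa [hderiv.deriv_eq, hsecond.deriv] using hmin.deriv_deriv_nonneg hcont

namespace ContinuousLinearMap

theorem apply_self_pos_of_injective (B : E →L[ℝ] E →L[ℝ] ℝ) (hsymm : ∀ v w, B v w = B w v)
    (hnonneg : ∀ v, 0 ≤ B v v) (hinj : Function.Injective B) {v : E} (hv : v ≠ 0) :
    0 < B v v := by
  refine (hnonneg v).lt_of_ne fun hvv => hv (hinj ?_)
  rw [map_zero]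
  ext w
  -- Cauchy–Schwarz for the semidefinite form: `(B v w)² ≤ B v v * B w w = 0`.
  have hcs := LinearMap.BilinForm.apply_mul_apply_le_of_forall_zero_le B.toLinearMap₁₂ hnonneg v w
  simp only [toLinearMap₁₂_apply_apply_apply, ← hvv, zero_mul, hsymm w v] at hcs
  exact mul_self_eq_zero.mp (le_antisymm hcs (mul_self_nonneg _))

theorem exists_pos_mul_sq_norm_le_apply_self [FiniteDimensional ℝ E] (B : E →L[ℝ] E →L[ℝ] ℝ)
    (hpos : ∀ v, v ≠ 0 → 0 < B v v) : ∃ m > 0, ∀ v, m * ‖v‖ ^ 2 ≤ B v v := by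
  obtain ⟨m, hm, hsphere⟩ := (isCompact_sphere (0 : E) 1).exists_forall_le'
    (B.continuous₂.comp (continuous_id.prodMk continuous_id)).continuousOn
    fun u hu => hpos u (ne_zero_of_mem_unit_sphere ⟨u, hu⟩)
  refine ⟨m, hm, fun v => ?_⟩
  rcases eq_or_ne v 0 with rfl | hv
  · simp
  have hnorm : ‖v‖ ≠ 0 := norm_ne_zero_iff.mpr hv
  have hu : ‖v‖⁻¹ • v ∈ sphere (0 : E) 1 := by
    simp [norm_smul, hnorm]
  calc m * ‖v‖ ^ 2 ≤ B (‖v‖⁻¹ • v) (‖v‖⁻¹ • v) * ‖v‖ ^ 2 := by gcongr; exact hsphere _ hu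
    _ = B v v := by simp only [map_smul, smul_apply, smul_eq_mul]; field_simp

theorem apply_self_nonneg_of_norm_sub_le {B B' : E →L[ℝ] E →L[ℝ] ℝ} {m : ℝ}
    (hB : ∀ v, m * ‖v‖ ^ 2 ≤ B v v) (hB' : ‖B' - B‖ ≤ m) (v : E) : 0 ≤ B' v v := by
  have hdiff : |B' v v - B v v| ≤ m * ‖v‖ ^ 2 :=
    calc |B' v v - B v v| = ‖(B' - B) v v‖ := by simp
      _ ≤ ‖B' - B‖ * ‖v‖ * ‖v‖ := le_opNorm₂ _ _ _
      _ ≤ m * ‖v‖ ^ 2 := by rw [mul_assoc, ← sq]; gcongr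
  linarith [(abs_le.mp hdiff).1, hB v]

end ContinuousLinearMap

theorem Convex.apply_sub_nonneg_of_fderiv_apply_self_nonneg {s : Set E} (hs : Convex ℝ s)
    {D : E → E →L[ℝ] ℝ} (hD : ∀ z ∈ s, DifferentiableAt ℝ D z)
    (hD' : ∀ z ∈ s, ∀ v, 0 ≤ fderiv ℝ D z v v) {y z : E} (hy : y ∈ s) (hz : z ∈ s) :
    0 ≤ (D y - D z) (y - z) := by
  set v := y - z
  set line : ℝ → E := fun u => z + u • v
  have hseg : ∀ u ∈ Icc (0 : ℝ) 1, line u ∈ s := fun u hu => hs.add_smul_sub_mem hz hy hu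
  have hderiv : ∀ u ∈ Icc (0 : ℝ) 1,
      HasDerivAt (fun u => D (line u) v) (fderiv ℝ D (line u) v v) u := fun u hu => by
    have hline : HasDerivAt line v u := by
      have := ((hasDerivAt_id u).smul_const v).const_add z
      rwa [one_smul] at this
    simpa using ((hD _ (hseg u hu)).hasFDerivAt.comp_hasDerivAt u hline).clm_apply
      (hasDerivAt_const u v)
  have hmono : MonotoneOn (fun u => D (line u) v) (Icc 0 1) :=
    monotoneOn_of_hasDerivWithinAt_nonneg (convex_Icc 0 1)
      (fun u hu => (hderiv u hu).continuousAt.continuousWithinAt)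
      (fun u hu => (hderiv u (interior_subset hu)).hasDerivWithinAt)
      (fun u hu => hD' _ (hseg u (interior_subset hu)) v)
  have := hmono (left_mem_Icc.mpr zero_le_one) (right_mem_Icc.mpr zero_le_one) zero_le_one
  simpa [line, v] using this

theorem IsLocalMin.eventually_fderiv_fderiv_apply_self_nonneg [FiniteDimensional ℝ E]
    {f : E → ℝ} {x : E} (h : IsLocalMin f x) (hf : ContDiffAt ℝ 2 f x)
    (hinj : Function.Injective (fderiv ℝ (fderiv ℝ f) x)) :
    ∀ᶠ y in 𝓝 x, ∀ v, 0 ≤ fderiv ℝ (fderiv ℝ f) y v v := by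
  have hf' : ContDiffAt ℝ 1 (fderiv ℝ f) x := hf.fderiv_right le_rfl
  have hnonneg := h.fderiv_fderiv_apply_self_nonneg
    ((hf.eventually (by simp)).mono fun y hy => hy.differentiableAt two_ne_zero)
    (hf'.differentiableAt one_ne_zero)
  obtain ⟨m, hm, hcoercive⟩ := (fderiv ℝ (fderiv ℝ f) x).exists_pos_mul_sq_norm_le_apply_self
    fun v hv => (fderiv ℝ (fderiv ℝ f) x).apply_self_pos_of_injective
      (hf.isSymmSndFDerivAt (by simp)) hnonneg hinj hv
  have hcont : ContinuousAt (fderiv ℝ (fderiv ℝ f)) x :=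
    (hf'.fderiv_right (m := 0) le_rfl).continuousAt
  filter_upwards [hcont.preimage_mem_nhds (closedBall_mem_nhds (fderiv ℝ (fderiv ℝ f) x) hm)]
    with y hy
  exact ContinuousLinearMap.apply_self_nonneg_of_norm_sub_le hcoercive
    ((dist_eq_norm (fderiv ℝ (fderiv ℝ f) y) _).symm.trans_le hy)

end NormedSpace

section Prox

variable {E : Type*} [NormedAddCommGroup E]

def prox (f : E → ℝ) (t : ℝ) (x : E) : Set E :=
  {z | ∀ w, f z + ‖z - x‖ ^ 2 / (2 * t) ≤ f w + ‖w - x‖ ^ 2 / (2 * t)}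

variable {f : E → ℝ} {t : ℝ} {x y z : E}

theorem prox_nonempty [ProperSpace E] (hf : Continuous f) {c : ℝ} (hc : ∀ w, c ≤ f w)
    (ht : 0 < t) (x : E) : (prox f t x).Nonempty := by
  have hdist : Tendsto (fun w => ‖w - x‖) (cocompact E) atTop :=
    tendsto_norm_cocompact_atTop.comp (Homeomorph.subRight x).isClosedEmbedding.tendsto_cocompact
  have hcoercive : Tendsto (fun w => f w + ‖w - x‖ ^ 2 / (2 * t)) (cocompact E) atTop :=
    tendsto_atTop_add_left_of_le _ c hc
      (((tendsto_pow_atTop two_ne_zero).comp hdist).atTop_div_const (by positivity))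
  exact (hf.add (by fun_prop)).exists_forall_le hcoercive

theorem norm_sub_le_of_mem_prox (hy : ∀ w, f y ≤ f w) (ht : 0 < t) (hz : z ∈ prox f t x) :
    ‖z - x‖ ≤ ‖y - x‖ := by
  have h := hz y
  have : ‖z - x‖ ^ 2 / (2 * t) ≤ ‖y - x‖ ^ 2 / (2 * t) := by linarith [hy z]
  exact pow_le_pow_iff_left₀ (norm_nonneg _) (norm_nonneg _) two_ne_zero |>.mp
    (div_le_div_iff_of_pos_right (by positivity) |>.mp this)

theorem le_of_mem_prox (ht : 0 ≤ t) (hz : z ∈ prox f t x) (y : E) :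
    f z ≤ f y + ‖y - x‖ ^ 2 / (2 * t) := by
  have : 0 ≤ ‖z - x‖ ^ 2 / (2 * t) := by positivity
  linarith [hz y]

theorem eventually_prox_subset_ball [ProperSpace E] (hf : Continuous f) {xstar : E}
    (hmin : ∀ w, f xstar ≤ f w) (huniq : ∀ z, (∀ w, f z ≤ f w) → z = xstar) (x : E) {δ : ℝ}
    (hδ : 0 < δ) : ∀ᶠ t in atTop, prox f t x ⊆ ball xstar δ := by
  set R := ‖xstar - x‖
  set K := closedBall x R \ ball xstar δ
  have hgap : ∀ z ∈ K, f xstar < f z := fun z hz =>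
    (hmin z).lt_of_ne fun h => hz.2 (huniq z (fun w => h ▸ hmin w) ▸ mem_ball_self hδ)
  obtain ⟨a, ha, hKa⟩ :=
    ((isCompact_closedBall x R).diff isOpen_ball).exists_forall_le' hf.continuousOn hgap
  have hsmall : ∀ᶠ t in atTop, R ^ 2 / (2 * t) < a - f xstar :=
    (tendsto_const_nhds.div_atTop (tendsto_id.const_mul_atTop two_pos)).eventually
      (gt_mem_nhds (sub_pos.mpr ha))
  filter_upwards [hsmall, eventually_gt_atTop 0] with t hsmall ht z hz
  by_contra hzball
  have hzK : z ∈ K := ⟨by simpa [dist_eq_norm] using norm_sub_le_of_mem_prox hmin ht hz, hzball⟩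
  linarith [hKa z hzK, le_of_mem_prox ht.le hz xstar]

variable [InnerProductSpace ℝ E]

theorem fderiv_eq_of_mem_prox (hz : z ∈ prox f t x) (hf : DifferentiableAt ℝ f z) :
    fderiv ℝ f z = -(t⁻¹ • innerSL ℝ (z - x)) := by
  have hq : HasFDerivAt (fun w => ‖w - x‖ ^ 2 / (2 * t)) (t⁻¹ • innerSL ℝ (z - x)) z := by
    simp_rw [div_eq_mul_inv]
    refine (((hasFDerivAt_id z).sub_const x).norm_sq.mul_const (2 * t)⁻¹).congr_fderiv ?_
    ext v
    simp
    ring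
  exact eq_neg_of_add_eq_zero_left <|
    IsLocalMin.hasFDerivAt_eq_zero (.of_forall fun w => hz w) (hf.hasFDerivAt.add hq)

theorem eq_of_mem_prox (ht : 0 < t) (hy : y ∈ prox f t x) (hz : z ∈ prox f t x)
    (hfy : DifferentiableAt ℝ f y) (hfz : DifferentiableAt ℝ f z)
    (hmono : 0 ≤ (fderiv ℝ f y - fderiv ℝ f z) (y - z)) : y = z := by
  have hcalc : (fderiv ℝ f y - fderiv ℝ f z) (y - z) = -(t⁻¹ * ‖y - z‖ ^ 2) := by
    rw [fderiv_eq_of_mem_prox hy hfy, fderiv_eq_of_mem_prox hz hfz, ← real_inner_self_eq_norm_sq]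
    have hinner :
        inner ℝ (y - x) (y - z) - inner ℝ (z - x) (y - z) = inner ℝ (y - z) (y - z) := by
      rw [← inner_sub_left, sub_sub_sub_cancel_right]
    simp only [sub_apply, neg_apply, smul_apply, innerSL_apply_apply, smul_eq_mul]
    linear_combination (-t⁻¹) * hinner
  have hsq : ‖y - z‖ ^ 2 ≤ 0 :=
    nonpos_of_mul_nonpos_right (by linarith [hmono.trans_eq hcalc]) (inv_pos.mpr ht)
  rw [← sub_eq_zero, ← norm_eq_zero]
  exact pow_eq_zero_iff two_ne_zero |>.mp (le_antisymm hsq (sq_nonneg _))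

end Prox

theorem prox_single_valued_of_nondegenerate_general {d : ℕ}
    (f : EuclideanSpace ℝ (Fin d) → ℝ)
    (hcont : Continuous f)
    (xstar : EuclideanSpace ℝ (Fin d)) (hmin : ∀ z, f xstar ≤ f z)
    (huniq : ∀ z, (∀ w, f z ≤ f w) → z = xstar)
    (U : Set (EuclideanSpace ℝ (Fin d))) (hU : U ∈ nhds xstar)
    (hC2 : ContDiffOn ℝ 2 f U)
    (hnondeg : Function.Injective (fderiv ℝ (fderiv ℝ f) xstar)) :
    ∀ x : EuclideanSpace ℝ (Fin d), ∃ t₀ > (0 : ℝ), ∀ t ≥ t₀,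
      ∃! z : EuclideanSpace ℝ (Fin d), ∀ w,
        f z + ‖z - x‖ ^ 2 / (2 * t) ≤ f w + ‖w - x‖ ^ 2 / (2 * t) := by
  intro x
  have hf : ContDiffAt ℝ 2 f xstar := hC2.contDiffAt hU
  obtain ⟨δ, hδ, hball⟩ := eventually_nhds_iff_ball.1 ((hf.eventually (by simp)).and
    (IsLocalMin.eventually_fderiv_fderiv_apply_self_nonneg (.of_forall hmin) hf hnondeg))
  obtain ⟨t₀, ht₀⟩ := eventually_atTop.1
    ((eventually_prox_subset_ball hcont hmin huniq x hδ).and (eventually_gt_atTop 0))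
  refine ⟨max t₀ 1, by positivity, fun t ht => ?_⟩
  obtain ⟨hsub, ht⟩ := ht₀ t (le_of_max_le_left ht)
  obtain ⟨z, hz⟩ := prox_nonempty hcont hmin ht x
  have hdiff : ∀ y ∈ prox f t x, DifferentiableAt ℝ f y := fun y hy =>
    (hball y (hsub hy)).1.differentiableAt two_ne_zero
  refine ⟨z, hz, fun y hy => eq_of_mem_prox ht hy hz (hdiff y hy) (hdiff z hz) ?_⟩
  exact (convex_ball xstar δ).apply_sub_nonneg_of_fderiv_apply_self_nonneg
    (fun w hw => ((hball w hw).1.fderiv_right (m := 1) le_rfl).differentiableAt one_ne_zero)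
    (fun w hw => (hball w hw).2) (hsub hy) (hsub hz)

/-- Proposition 3.3(2). If `f : ℝ^d → ℝ` is continuous, `p`-coercive,
has a unique global minimizer `x*` which is nondegenerate (`f` is `C²` on a neighborhood
`U` of `x*` and its Hessian at `x*` is nonsingular), then for every `x` there exists
`t₀ > 0` such that for all `t ≥ t₀`, `prox_{tf}(x)` is a singleton, i.e. the function
`z ↦ f z + ‖z - x‖²/(2t)` has a unique global minimizer. -/
theorem prox_single_valued_of_nondegenerate {d : ℕ}
    (f : EuclideanSpace ℝ (Fin d) → ℝ) (p : ℝ) (hp : 0 < p)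
    (hcont : Continuous f)
    (hcoer : Tendsto (fun z : EuclideanSpace ℝ (Fin d) => f z / ‖z‖ ^ p)
      (comap norm atTop) atTop)
    (xstar : EuclideanSpace ℝ (Fin d)) (hmin : ∀ z, f xstar ≤ f z)
    (huniq : ∀ z, (∀ w, f z ≤ f w) → z = xstar)
    (U : Set (EuclideanSpace ℝ (Fin d))) (hU : U ∈ nhds xstar)
    (hC2 : ContDiffOn ℝ 2 f U)
    (hnondeg : Function.Injective (fderiv ℝ (fderiv ℝ f) xstar)) :
    ∀ x : EuclideanSpace ℝ (Fin d), ∃ t₀ > (0 : ℝ), ∀ t ≥ t₀,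
      ∃! z : EuclideanSpace ℝ (Fin d), ∀ w,
        f z + ‖z - x‖ ^ 2 / (2 * t) ≤ f w + ‖w - x‖ ^ 2 / (2 * t) :=
  prox_single_valued_of_nondegenerate_general f hcont xstar hmin huniq U hU hC2 hnondeg
end

section
/- Let f : ℝ^d → ℝ be continuous and p-coercive for some p > 0, with a unique global minimizer x* and minimum value f_min = f(x*). Suppose f is sharp on a neighborhood U of x*, i.e., there exists η > 0 with f(x) − f_min ≥ η ‖x − x*‖ for all x ∈ U. Then for every x ∈ ℝ^d there exists t_0 > 0 such that for all t ≥ t_0, prox_{tf}(x) is a singleton; in fact prox_{tf}(x) = {x*} for all t ≥ t_0. -/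
open Filter Metric

/-!
Since `x*` minimises `f`, it also minimises `f z + ‖z - x‖² / (2t)` as soon as
`‖x* - x‖² - ‖w - x‖² < 2t (f w - f x*)` for every `w ≠ x*`. Close to `x*` the left side is
`O(‖w - x*‖)`, which sharpness beats once `t` is large; away from `x*` the left side is at most
`‖x* - x‖²`, while continuity, coercivity and uniqueness of the minimiser give a uniform
positive gap `f w - f x* ≥ δ`.
-/

theorem setOf_forall_le_eq_singleton {α β : Type*} [LinearOrder β] {g : α → β} {a : α}
    (h : ∀ w ≠ a, g a < g w) : {z | ∀ w, g z ≤ g w} = {a} := by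
  ext z
  refine ⟨fun hz => ?_, fun hz w => ?_⟩
  · by_contra hza
    exact (hz a).not_gt (h z hza)
  · rw [hz]
    rcases eq_or_ne w a with rfl | hwa
    exacts [le_rfl, (h w hwa).le]

theorem tendsto_atTop_of_tendsto_div_rpow_norm {E : Type*} [SeminormedAddCommGroup E]
    {f : E → ℝ} {p : ℝ} (hp : 0 < p)
    (h : Tendsto (fun z => f z / ‖z‖ ^ p) (comap norm atTop) atTop) :
    Tendsto f (comap norm atTop) atTop := by
  have hpow : Tendsto (fun z : E => ‖z‖ ^ p) (comap norm atTop) atTop :=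
    (tendsto_rpow_atTop hp).comp tendsto_comap
  refine (h.atTop_mul_atTop₀ hpow).congr' ?_
  filter_upwards [hpow.eventually_gt_atTop 0] with z hz
  exact div_mul_cancel₀ _ hz.ne'

theorem exists_pos_add_le_of_tendsto_cocompact {α : Type*} [TopologicalSpace α] {f : α → ℝ}
    (hf : Continuous f) (hcoer : Tendsto f (cocompact α) atTop) {s : Set α} (hs : IsClosed s)
    {m : ℝ} (hm : ∀ w ∈ s, m < f w) : ∃ δ > 0, ∀ w ∈ s, m + δ ≤ f w := by
  rcases s.eq_empty_or_nonempty with rfl | ⟨w₁, hw₁⟩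
  · exact ⟨1, one_pos, by simp⟩
  obtain ⟨w₀, hw₀, hmin⟩ := hf.continuousOn.exists_isMinOn' hs hw₁
    ((hcoer.eventually (eventually_ge_atTop (f w₁))).filter_mono inf_le_left)
  exact ⟨f w₀ - m, sub_pos.2 (hm w₀ hw₀), fun w hw => by rw [add_sub_cancel]; exact hmin hw⟩

theorem sq_norm_sub_sub_sq_norm_sub_le {E : Type*} [SeminormedAddCommGroup E] (x y z : E) :
    ‖y - x‖ ^ 2 - ‖z - x‖ ^ 2 ≤ ‖z - y‖ * (2 * ‖y - x‖ + ‖z - y‖) := by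
  have h₁ : ‖y - x‖ ≤ ‖z - y‖ + ‖z - x‖ := by
    simpa [norm_sub_rev z y] using norm_sub_le_norm_sub_add_norm_sub y z x
  have h₂ : ‖z - x‖ ≤ ‖z - y‖ + ‖y - x‖ := norm_sub_le_norm_sub_add_norm_sub z y x
  nlinarith [norm_nonneg (y - x), norm_nonneg (z - x), norm_nonneg (z - y)]

theorem exists_sq_norm_sub_sub_lt_mul_of_sharp {E : Type*} [NormedAddCommGroup E] {f : E → ℝ}
    {xstar : E} (x : E) {r η δ : ℝ} (hr : 0 < r) (hη : 0 < η) (hδ : 0 < δ)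
    (hnear : ∀ w ∈ closedBall xstar r, η * ‖w - xstar‖ ≤ f w - f xstar)
    (hfar : ∀ w ∉ ball xstar r, f xstar + δ ≤ f w) :
    ∃ t₀ > 0, ∀ t ≥ t₀, ∀ w ≠ xstar,
      ‖xstar - x‖ ^ 2 - ‖w - x‖ ^ 2 < 2 * t * (f w - f xstar) := by
  refine ⟨(2 * ‖xstar - x‖ + r) / η + (‖xstar - x‖ ^ 2 + 1) / δ, by positivity,
    fun t ht w hw => ?_⟩
  have htη : 2 * ‖xstar - x‖ + r ≤ t * η := by
    rw [← div_le_iff₀ hη]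
    linarith [show 0 ≤ (‖xstar - x‖ ^ 2 + 1) / δ by positivity]
  have htδ : ‖xstar - x‖ ^ 2 + 1 ≤ t * δ := by
    rw [← div_le_iff₀ hδ]
    linarith [show 0 ≤ (2 * ‖xstar - x‖ + r) / η by positivity]
  by_cases hwr : ‖w - xstar‖ ≤ r
  · have hc : 0 < ‖w - xstar‖ := norm_pos_iff.2 (sub_ne_zero.2 hw)
    calc ‖xstar - x‖ ^ 2 - ‖w - x‖ ^ 2
        ≤ ‖w - xstar‖ * (2 * ‖xstar - x‖ + ‖w - xstar‖) :=
          sq_norm_sub_sub_sq_norm_sub_le x xstar w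
      _ < 2 * ‖w - xstar‖ * (t * η) := by nlinarith [norm_nonneg (xstar - x)]
      _ ≤ 2 * t * (f w - f xstar) := by
          nlinarith [hnear w (by rwa [mem_closedBall, dist_eq_norm])]
  · have hgap := hfar w (by rw [mem_ball, dist_eq_norm]; linarith)
    nlinarith [sq_nonneg ‖w - x‖]

/-- Proposition 3.3(3). If `f : ℝ^d → ℝ` is continuous, `p`-coercive,
has a unique global minimizer `x*`, and is sharp on a neighborhood `U` of `x*`
(`f z - f x* ≥ η ‖z - x*‖` on `U` for some `η > 0`), then for every `x` there exists
`t₀ > 0` such that for all `t ≥ t₀`, `prox_{tf}(x) = {x*}`. -/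
theorem prox_single_valued_of_sharp {d : ℕ}
    (f : EuclideanSpace ℝ (Fin d) → ℝ) (p : ℝ) (hp : 0 < p)
    (hcont : Continuous f)
    (hcoer : Tendsto (fun z : EuclideanSpace ℝ (Fin d) => f z / ‖z‖ ^ p)
      (comap norm atTop) atTop)
    (xstar : EuclideanSpace ℝ (Fin d)) (hmin : ∀ z, f xstar ≤ f z)
    (huniq : ∀ z, (∀ w, f z ≤ f w) → z = xstar)
    (U : Set (EuclideanSpace ℝ (Fin d))) (hU : U ∈ nhds xstar)
    (η : ℝ) (hη : 0 < η)
    (hsharp : ∀ z ∈ U, η * ‖z - xstar‖ ≤ f z - f xstar) :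
    ∀ x : EuclideanSpace ℝ (Fin d), ∃ t₀ > (0 : ℝ), ∀ t ≥ t₀,
      {z : EuclideanSpace ℝ (Fin d) | ∀ w,
        f z + ‖z - x‖ ^ 2 / (2 * t) ≤ f w + ‖w - x‖ ^ 2 / (2 * t)} = {xstar} := by
  intro x
  have hstrict : ∀ w ≠ xstar, f xstar < f w := fun w hw =>
    (hmin w).lt_of_ne fun h => hw (huniq w fun v => h ▸ hmin v)
  have hcocompact : Tendsto f (cocompact _) atTop := by
    rw [← cobounded_eq_cocompact, ← comap_norm_atTop]
    exact tendsto_atTop_of_tendsto_div_rpow_norm hp hcoer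
  obtain ⟨r, hr, hrU⟩ := nhds_basis_closedBall.mem_iff.1 hU
  obtain ⟨δ, hδ, hfar⟩ := exists_pos_add_le_of_tendsto_cocompact hcont hcocompact
    isOpen_ball.isClosed_compl fun w hw =>
      hstrict w (by rintro rfl; exact hw (mem_ball_self hr))
  obtain ⟨t₀, ht₀, hlt⟩ := exists_sq_norm_sub_sub_lt_mul_of_sharp x hr hη hδ
    (fun w hw => hsharp w (hrU hw)) hfar
  refine ⟨t₀, ht₀, fun t ht => setOf_forall_le_eq_singleton fun w hw => ?_⟩
  have key := (div_lt_iff₀' (by linarith : (0 : ℝ) < 2 * t)).2 (hlt t ht w hw)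
  rw [sub_div] at key
  linarith
end

section
/- Let f : ℝ^d → ℝ be continuous and p-coercive for some p > 0, with a unique global minimizer x*. Then for every x ∈ ℝ^d and every neighborhood Ũ of x*, there exists t_0 > 0 such that for all t ≥ t_0, every global minimizer of z ↦ f(z) + ‖z − x‖²/(2t) lies in Ũ (i.e., prox_{tf}(x) ⊆ Ũ). -/
open Filter

/-- If `f : ℝ^d → ℝ` is continuous, `p`-coercive, with a unique global
minimizer `x*`, then for every `x` and every neighborhood `Ũ` of `x*`, there is `t₀ > 0`
such that for all `t ≥ t₀`, every global minimizer of `z ↦ f z + ‖z - x‖²/(2t)` lies in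
`Ũ` (i.e. `prox_{tf}(x) ⊆ Ũ`). -/
theorem prox_subset_nhds_of_minimizer {d : ℕ}
    (f : EuclideanSpace ℝ (Fin d) → ℝ) (p : ℝ) (hp : 0 < p)
    (hcont : Continuous f)
    (hcoer : Tendsto (fun z : EuclideanSpace ℝ (Fin d) => f z / ‖z‖ ^ p)
      (comap norm atTop) atTop)
    (xstar : EuclideanSpace ℝ (Fin d)) (hmin : ∀ z, f xstar ≤ f z)
    (huniq : ∀ z, (∀ w, f z ≤ f w) → z = xstar) :
    ∀ x : EuclideanSpace ℝ (Fin d), ∀ Utilde ∈ nhds xstar, ∃ t₀ > (0 : ℝ), ∀ t ≥ t₀,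
      ∀ z : EuclideanSpace ℝ (Fin d),
        (∀ w, f z + ‖z - x‖ ^ 2 / (2 * t) ≤ f w + ‖w - x‖ ^ 2 / (2 * t)) →
        z ∈ Utilde := by
  intro x Utilde hU
  set U := interior Utilde with hUdef
  have hUopen : IsOpen U := isOpen_interior
  have hxU : xstar ∈ U := mem_interior_iff_mem_nhds.mpr hU
  have hUsub : U ⊆ Utilde := interior_subset
  set K := Metric.closedBall x ‖xstar - x‖ with hKdef
  have hKc : IsCompact K := isCompact_closedBall x _
  -- key estimates for any minimizer with t > 0
  have key : ∀ t : ℝ, 0 < t → ∀ z : EuclideanSpace ℝ (Fin d),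
      (∀ w, f z + ‖z - x‖ ^ 2 / (2 * t) ≤ f w + ‖w - x‖ ^ 2 / (2 * t)) →
      z ∈ K ∧ f z ≤ f xstar + ‖xstar - x‖ ^ 2 / (2 * t) := by
    intro t ht z hz
    have h2t : (0 : ℝ) < 2 * t := by linarith
    have h1 := hz xstar
    have h2 := hmin z
    have hdiv : ‖z - x‖ ^ 2 / (2 * t) ≤ ‖xstar - x‖ ^ 2 / (2 * t) := by linarith
    have hsq : ‖z - x‖ ^ 2 ≤ ‖xstar - x‖ ^ 2 :=
      (div_le_div_iff_of_pos_right h2t).mp hdiv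
    have hnorm : ‖z - x‖ ≤ ‖xstar - x‖ := by
      nlinarith [norm_nonneg (z - x), norm_nonneg (xstar - x)]
    have hzK : z ∈ K := by
      rw [hKdef, Metric.mem_closedBall, dist_eq_norm]
      exact hnorm
    have hnn : (0 : ℝ) ≤ ‖z - x‖ ^ 2 / (2 * t) :=
      div_nonneg (sq_nonneg _) (le_of_lt h2t)
    exact ⟨hzK, by linarith⟩
  by_cases hcase : ∃ y ∈ K, y ∉ U
  · -- f attains a minimum on the compact set K \ U, strictly above f xstar
    obtain ⟨y₁, hy₁K, hy₁U⟩ := hcase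
    have hSne : (K \ U).Nonempty := ⟨y₁, hy₁K, hy₁U⟩
    have hSc : IsCompact (K \ U) := hKc.diff hUopen
    obtain ⟨y₀, hy₀S, hy₀min⟩ := hSc.exists_isMinOn hSne hcont.continuousOn
    have hy₀ne : y₀ ≠ xstar := fun h => hy₀S.2 (h ▸ hxU)
    have hstrict : f xstar < f y₀ := by
      rcases lt_or_eq_of_le (hmin y₀) with h | h
      · exact h
      · exfalso
        exact hy₀ne (huniq y₀ (fun w => h ▸ hmin w))
    set ε := f y₀ - f xstar with hε
    have hεpos : 0 < ε := by simp [hε]; linarith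
    refine ⟨max 1 (‖xstar - x‖ ^ 2 / ε), lt_of_lt_of_le one_pos (le_max_left _ _), ?_⟩
    intro t ht z hz
    have ht1 : (1 : ℝ) ≤ t := le_trans (le_max_left _ _) ht
    have htpos : (0 : ℝ) < t := by linarith
    have htε : ‖xstar - x‖ ^ 2 / ε ≤ t := le_trans (le_max_right _ _) ht
    have hCεt : ‖xstar - x‖ ^ 2 ≤ t * ε := (div_le_iff₀ hεpos).mp htε
    obtain ⟨hzK, hzf⟩ := key t htpos z hz
    have hCt : ‖xstar - x‖ ^ 2 / (2 * t) ≤ ε / 2 := by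
      rw [div_le_div_iff₀ (by linarith) (by norm_num : (0:ℝ) < 2)]
      nlinarith
    have hzU : z ∈ U := by
      by_contra hzU
      have := hy₀min ⟨hzK, hzU⟩
      simp only [Set.mem_setOf_eq] at this
      have : f y₀ ≤ f z := this
      linarith
    exact hUsub hzU
  · push_neg at hcase
    refine ⟨1, one_pos, ?_⟩
    intro t ht z hz
    obtain ⟨hzK, _⟩ := key t (by linarith) z hz
    exact hUsub (hcase z hzK)
end

section
/- Let φ̃ : ℝ^d → ℝ be measurable with φ̃ ≥ 0, let z* ∈ ℝ^d, and let η > 0 and p > 0 be such that φ̃(z) ≥ ‖z − z*‖^p whenever ‖z − z*‖ ≥ η. Then the tail integral ∫_{{z : ‖z − z*‖ ≥ η}} exp(−φ̃(z)/δ) dz is o(exp(−η^p/(2δ))) as δ → 0⁺; that is, exp(η^p/(2δ)) · ∫_{{z : ‖z − z*‖ ≥ η}} exp(−φ̃(z)/δ) dz → 0 as δ → 0⁺. -/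
open Filter MeasureTheory

lemma pow_div_factorial_le_exp' (x : ℝ) (hx : 0 ≤ x) (n : ℕ) :
    x ^ n / n.factorial ≤ Real.exp x := by
  calc x ^ n / n.factorial
      ≤ ∑ i ∈ Finset.range (n + 1), x ^ i / i.factorial := by
        refine Finset.single_le_sum (f := fun i => x ^ i / (i.factorial : ℝ)) ?_ ?_
        · intro i _; positivity
        · simp
    _ ≤ Real.exp x := Real.sum_le_exp_of_nonneg hx _

lemma tail_integrable {d : ℕ} (zstar : EuclideanSpace ℝ (Fin d)) (η p : ℝ)
    (hη : 0 < η) (hp : 0 < p) :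
    IntegrableOn (fun z : EuclideanSpace ℝ (Fin d) => Real.exp (-‖z - zstar‖ ^ p))
      {z | η ≤ ‖z - zstar‖} := by
  obtain ⟨n, hn⟩ := exists_nat_gt ((d : ℝ) / p)
  have hs : (d : ℝ) < p * n := by
    rw [div_lt_iff₀ hp] at hn; linarith [hn]
  set s : ℝ := p * n with hs_def
  have hs0 : 0 < s := lt_of_le_of_lt (Nat.cast_nonneg d) hs
  have hbase : Integrable (fun z : EuclideanSpace ℝ (Fin d) => (1 + ‖z‖) ^ (-s)) := by
    apply integrable_one_add_norm
    rwa [finrank_euclideanSpace_fin]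
  have hbase2 : Integrable (fun z : EuclideanSpace ℝ (Fin d) => (1 + ‖z - zstar‖) ^ (-s)) :=
    hbase.comp_sub_right zstar
  have hmeasS : MeasurableSet {z : EuclideanSpace ℝ (Fin d) | η ≤ ‖z - zstar‖} := by
    have : Continuous fun z : EuclideanSpace ℝ (Fin d) => ‖z - zstar‖ := by continuity
    exact (isClosed_le continuous_const this).measurableSet
  refine ((hbase2.const_mul ((n.factorial : ℝ) * (1 + η⁻¹) ^ s)).integrableOn).mono' ?_ ?_
  · apply Measurable.aestronglyMeasurable
    fun_prop
  · rw [ae_restrict_iff' hmeasS]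
    filter_upwards with z hz
    set r := ‖z - zstar‖ with hr_def
    have hr0 : 0 < r := lt_of_lt_of_le hη hz
    have hrp0 : 0 < r ^ p := Real.rpow_pos_of_pos hr0 p
    have hrs : r ^ s = (r ^ p) ^ n := by
      rw [hs_def, Real.rpow_mul hr0.le, Real.rpow_natCast]
    have hrs0 : 0 < r ^ s := Real.rpow_pos_of_pos hr0 s
    have h1 : Real.exp (-r ^ p) ≤ (n.factorial : ℝ) / r ^ s := by
      have hpow : (r ^ p) ^ n / n.factorial ≤ Real.exp (r ^ p) :=
        pow_div_factorial_le_exp' _ hrp0.le n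
      calc Real.exp (-r ^ p) = (Real.exp (r ^ p))⁻¹ := Real.exp_neg _
        _ ≤ ((r ^ p) ^ n / n.factorial)⁻¹ := by
            apply inv_anti₀ _ hpow
            positivity
        _ = (n.factorial : ℝ) / (r ^ p) ^ n := inv_div _ _
        _ = (n.factorial : ℝ) / r ^ s := by rw [hrs]
    have h2 : (n.factorial : ℝ) / r ^ s
        ≤ (n.factorial : ℝ) * (1 + η⁻¹) ^ s * (1 + r) ^ (-s) := by
      have hb0 : (0:ℝ) < 1 + r := by linarith
      have hηr : 1 + r ≤ (1 + η⁻¹) * r := by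
        have : 1 ≤ η⁻¹ * r := by
          rw [← div_eq_inv_mul, le_div_iff₀ hη]
          simpa using hz
        nlinarith
      have hpowle : (1 + r) ^ s ≤ (1 + η⁻¹) ^ s * r ^ s := by
        rw [← Real.mul_rpow (by positivity) hr0.le]
        exact Real.rpow_le_rpow hb0.le hηr hs0.le
      rw [Real.rpow_neg hb0.le, ← div_eq_mul_inv, div_le_div_iff₀ hrs0 (by positivity)]
      calc (n.factorial : ℝ) * (1 + r) ^ s
          ≤ (n.factorial : ℝ) * ((1 + η⁻¹) ^ s * r ^ s) :=
            mul_le_mul_of_nonneg_left hpowle (by positivity)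
        _ = (n.factorial : ℝ) * (1 + η⁻¹) ^ s * r ^ s := by ring
    rw [Real.norm_eq_abs, abs_of_pos (Real.exp_pos _)]
    exact h1.trans h2

/-- If `φ̃ : ℝ^d → ℝ` is measurable, nonnegative, and satisfies
`φ̃ z ≥ ‖z - z*‖^p` whenever `‖z - z*‖ ≥ η` (for some `η > 0`, `p > 0`), then the tail
integral `∫_{‖z - z*‖ ≥ η} exp(-φ̃ z / δ) dz` is `o(exp(-η^p/(2δ)))` as `δ → 0⁺`. -/
theorem tail_integral_little_o {d : ℕ}
    (φ : EuclideanSpace ℝ (Fin d) → ℝ) (hmeas : Measurable φ)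
    (hnonneg : ∀ z, 0 ≤ φ z)
    (zstar : EuclideanSpace ℝ (Fin d)) (η p : ℝ) (hη : 0 < η) (hp : 0 < p)
    (hlb : ∀ z : EuclideanSpace ℝ (Fin d), η ≤ ‖z - zstar‖ → ‖z - zstar‖ ^ p ≤ φ z) :
    Tendsto (fun δ : ℝ => Real.exp (η ^ p / (2 * δ)) *
        ∫ z in {z : EuclideanSpace ℝ (Fin d) | η ≤ ‖z - zstar‖}, Real.exp (-φ z / δ))
      (nhdsWithin 0 (Set.Ioi 0)) (nhds 0) := by
  set S : Set (EuclideanSpace ℝ (Fin d)) := {z | η ≤ ‖z - zstar‖} with hS_def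
  have hmeasS : MeasurableSet S := by
    have : Continuous fun z : EuclideanSpace ℝ (Fin d) => ‖z - zstar‖ := by continuity
    exact (isClosed_le continuous_const this).measurableSet
  have hIntBase : IntegrableOn (fun z : EuclideanSpace ℝ (Fin d) =>
      Real.exp (-‖z - zstar‖ ^ p)) S := tail_integrable zstar η p hη hp
  set C : ℝ := ∫ z in S, Real.exp (-‖z - zstar‖ ^ p) with hC_def
  -- upper bound function
  have key : ∀ᶠ δ in nhdsWithin (0:ℝ) (Set.Ioi 0),
      Real.exp (η ^ p / (2 * δ)) * ∫ z in S, Real.exp (-φ z / δ)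
        ≤ (Real.exp (η ^ p) * C) * Real.exp (-(η ^ p / (2 * δ))) := by
    filter_upwards [self_mem_nhdsWithin, Ioo_mem_nhdsGT_of_mem (by
      constructor <;> norm_num : (0:ℝ) ∈ Set.Ico 0 1)] with δ hδ0' hδmem
    have hδ0 : 0 < δ := hδ0'
    have hδ1 : δ < 1 := hδmem.2
    have hptwise : ∀ z ∈ S, Real.exp (-φ z / δ)
        ≤ Real.exp (η ^ p - η ^ p / δ) * Real.exp (-‖z - zstar‖ ^ p) := by
      intro z hz
      rw [← Real.exp_add, Real.exp_le_exp]
      have hre : η ^ p ≤ ‖z - zstar‖ ^ p := Real.rpow_le_rpow hη.le hz hp.le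
      have hφ : ‖z - zstar‖ ^ p ≤ φ z := hlb z hz
      rw [div_le_iff₀ hδ0] at *
      have h2 : η ^ p / δ * δ = η ^ p := div_mul_cancel₀ _ hδ0.ne'
      nlinarith [h2, mul_nonneg (sub_nonneg.2 hδ1.le) (sub_nonneg.2 hre), hφ]
    have hIntRHS : IntegrableOn (fun z : EuclideanSpace ℝ (Fin d) =>
        Real.exp (η ^ p - η ^ p / δ) * Real.exp (-‖z - zstar‖ ^ p)) S :=
      hIntBase.const_mul _
    have hIntLHS : IntegrableOn (fun z : EuclideanSpace ℝ (Fin d) =>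
        Real.exp (-φ z / δ)) S := by
      refine hIntRHS.mono' ?_ ?_
      · exact (Measurable.aestronglyMeasurable (by fun_prop))
      · rw [ae_restrict_iff' hmeasS]
        filter_upwards with z hz
        rw [Real.norm_eq_abs, abs_of_pos (Real.exp_pos _)]
        exact hptwise z hz
    have hmono : (∫ z in S, Real.exp (-φ z / δ))
        ≤ Real.exp (η ^ p - η ^ p / δ) * C := by
      rw [hC_def, ← integral_const_mul]
      exact setIntegral_mono_on hIntLHS hIntRHS hmeasS hptwise
    calc Real.exp (η ^ p / (2 * δ)) * ∫ z in S, Real.exp (-φ z / δ)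
        ≤ Real.exp (η ^ p / (2 * δ)) * (Real.exp (η ^ p - η ^ p / δ) * C) := by
          apply mul_le_mul_of_nonneg_left hmono (Real.exp_pos _).le
      _ = (Real.exp (η ^ p) * C) * Real.exp (-(η ^ p / (2 * δ))) := by
          rw [← mul_assoc, ← Real.exp_add, mul_comm (Real.exp _) C, mul_assoc]
          have hexp : Real.exp (η ^ p / (2 * δ) + (η ^ p - η ^ p / δ))
              = Real.exp (η ^ p) * Real.exp (-(η ^ p / (2 * δ))) := by
            rw [← Real.exp_add]
            congr 1
            field_simp
            ring
          rw [hexp]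
          ring
  have hnonneg' : ∀ᶠ δ in nhdsWithin (0:ℝ) (Set.Ioi 0),
      0 ≤ Real.exp (η ^ p / (2 * δ)) * ∫ z in S, Real.exp (-φ z / δ) := by
    filter_upwards with δ
    have : 0 ≤ ∫ z in S, Real.exp (-φ z / δ) :=
      setIntegral_nonneg hmeasS fun z _ => (Real.exp_pos _).le
    positivity
  have hlim : Tendsto (fun δ : ℝ => (Real.exp (η ^ p) * C) * Real.exp (-(η ^ p / (2 * δ))))
      (nhdsWithin 0 (Set.Ioi 0)) (nhds 0) := by
    have h1 : Tendsto (fun δ : ℝ => η ^ p / (2 * δ)) (nhdsWithin 0 (Set.Ioi 0)) atTop := by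
      have heq : ∀ δ : ℝ, η ^ p / (2 * δ) = η ^ p / 2 * δ⁻¹ := by
        intro δ
        rw [div_eq_mul_inv, mul_inv, ← mul_assoc, div_eq_mul_inv]
      simp only [heq]
      exact (tendsto_inv_nhdsGT_zero).const_mul_atTop
        (by positivity : (0:ℝ) < η ^ p / 2)
    have h2 : Tendsto (fun δ : ℝ => Real.exp (-(η ^ p / (2 * δ))))
        (nhdsWithin 0 (Set.Ioi 0)) (nhds 0) :=
      Real.tendsto_exp_neg_atTop_nhds_zero.comp h1
    simpa using h2.const_mul (Real.exp (η ^ p) * C)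
  exact squeeze_zero' hnonneg' key hlim
end

section
/- Let a : ℕ → ℝ, let m ≥ 1 be an integer, η > 0, and K ≥ max(m − 1, 1) an integer. Suppose that for every k ≥ K, a(k+1) ≤ max{ a(k), a(k−1), …, a(k−m+1) } − η/k. Then a is not bounded below; in fact inf_k a(k) = −∞. -/
/-!
Let `W k` be the maximum of the window `a k, …, a (k - m + 1)`. The hypothesis makes `W`
nonincreasing from `K` on, and since each of the `m` terms entering the window between `k` and
`k + m` lies at least `η / (k + m)` below `W k`, one has `W (k + m) ≤ W k - η / (k + m)`.
Iterating gives `W (K + t m) ≤ W K - η Σ_{s < t} 1 / (K + (s + 1) m)`, and this sum diverges by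
comparison with the harmonic series, so `a (K + t m) ≤ W (K + t m)` is unbounded below.
-/

open Finset Filter Topology

noncomputable def windowMax (a : ℕ → ℝ) {m : ℕ} (hm : (range m).Nonempty) (k : ℕ) : ℝ :=
  (range m).sup' hm fun j => a (k - j)

section WindowMax

variable {a : ℕ → ℝ} {m : ℕ} (hm : (range m).Nonempty) {δ : ℕ → ℝ} {K : ℕ}

theorem le_windowMax (k : ℕ) : a k ≤ windowMax a hm k :=
  le_sup' (fun j => a (k - j)) (mem_range.mpr (nonempty_range_iff.mp hm).bot_lt)

theorem windowMax_succ_le {k : ℕ} {d : ℝ} (hd : 0 ≤ d) (h : a (k + 1) ≤ windowMax a hm k - d) :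
    windowMax a hm (k + 1) ≤ windowMax a hm k := by
  refine sup'_le _ _ fun j hj => ?_
  rcases j with _ | j
  · rw [Nat.sub_zero]
    linarith
  · rw [Nat.add_sub_add_right]
    exact le_sup' (fun j => a (k - j)) (mem_range.mpr (by rw [mem_range] at hj; omega))

theorem windowMax_antitoneOn (hδ : ∀ k, K ≤ k → 0 ≤ δ k)
    (h : ∀ k, K ≤ k → a (k + 1) ≤ windowMax a hm k - δ k) :
    AntitoneOn (windowMax a hm) (Set.Ici K) :=
  antitoneOn_nat_Ici_of_succ_le fun k hk => windowMax_succ_le hm (hδ k hk) (h k hk)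

/-- Every term of the window at `k + m` was produced by the recursion at some `i ∈ [k, k + m)`. -/
theorem windowMax_add_le (hδ : ∀ k, K ≤ k → 0 ≤ δ k) (hδ_anti : AntitoneOn δ (Set.Ici K))
    (h : ∀ k, K ≤ k → a (k + 1) ≤ windowMax a hm k - δ k) {k : ℕ} (hk : K ≤ k) :
    windowMax a hm (k + m) ≤ windowMax a hm k - δ (k + m) := by
  refine sup'_le _ _ fun j hj => ?_
  have hj : j < m := mem_range.mp hj
  obtain ⟨i, hki, hi, hij⟩ : ∃ i, k ≤ i ∧ i < k + m ∧ k + m - j = i + 1 :=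
    ⟨k + m - 1 - j, by omega, by omega, by omega⟩
  rw [hij]
  have hKi : K ≤ i := hk.trans hki
  have hW : windowMax a hm i ≤ windowMax a hm k := windowMax_antitoneOn hm hδ h hk hKi hki
  have hδi : δ (k + m) ≤ δ i := hδ_anti hKi (by simp only [Set.mem_Ici]; omega) hi.le
  linarith [h i hKi]

theorem windowMax_le_sub_sum (hδ : ∀ k, K ≤ k → 0 ≤ δ k) (hδ_anti : AntitoneOn δ (Set.Ici K))
    (h : ∀ k, K ≤ k → a (k + 1) ≤ windowMax a hm k - δ k) (t : ℕ) :
    windowMax a hm (K + t * m) ≤ windowMax a hm K - ∑ s ∈ range t, δ (K + (s + 1) * m) := by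
  induction t with
  | zero => simp
  | succ t ih =>
    have hstep := windowMax_add_le hm hδ hδ_anti h (Nat.le_add_right K (t * m))
    rw [sum_range_succ, show K + (t + 1) * m = K + t * m + m by ring]
    linarith

theorem not_bddBelow_of_le_windowMax_sub (hδ : ∀ k, K ≤ k → 0 ≤ δ k)
    (hδ_anti : AntitoneOn δ (Set.Ici K)) (h : ∀ k, K ≤ k → a (k + 1) ≤ windowMax a hm k - δ k)
    (hδ_sum : Tendsto (fun t => ∑ s ∈ range t, δ (K + (s + 1) * m)) atTop atTop) :
    ¬ BddBelow (Set.range a) := by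
  rintro ⟨c, hc⟩
  obtain ⟨t, ht⟩ := (hδ_sum.eventually_gt_atTop (windowMax a hm K - c)).exists
  have hlow : c ≤ a (K + t * m) := hc (Set.mem_range_self _)
  have hW : a (K + t * m) ≤ windowMax a hm (K + t * m) := le_windowMax hm _
  linarith [windowMax_le_sub_sum hm hδ hδ_anti h t]

end WindowMax

theorem tendsto_sum_range_div_natCast_add_mul_atTop {η : ℝ} (hη : 0 < η) (b : ℕ) {c : ℕ}
    (hc : 0 < c) :
    Tendsto (fun t => ∑ s ∈ range t, η / ((b + (s + 1) * c : ℕ) : ℝ)) atTop atTop := by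
  have hbc : (0 : ℝ) < b + c := by positivity
  have hterm (s : ℕ) : η / (b + c) * (1 / (s + 1)) ≤ η / ((b + (s + 1) * c : ℕ) : ℝ) := by
    rw [div_mul_div_comm, mul_one]
    refine div_le_div_of_nonneg_left hη.le (by positivity) ?_
    push_cast
    nlinarith [(Nat.cast_nonneg s : (0 : ℝ) ≤ s), (Nat.cast_nonneg b : (0 : ℝ) ≤ b)]
  refine tendsto_atTop_mono (fun t => ?_)
    (Real.tendsto_sum_range_one_div_nat_succ_atTop.const_mul_atTop (div_pos hη hbc))
  rw [mul_sum]
  exact sum_le_sum fun s _ => hterm s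

/-- If a real sequence `a` satisfies, for all `k ≥ K` (where
`K ≥ max (m-1) 1` and `m ≥ 1`), `a (k+1) ≤ max {a k, a (k-1), …, a (k-m+1)} - η/k`
with `η > 0`, then `a` is not bounded below. -/
theorem not_bddBelow_of_sufficient_decrease (a : ℕ → ℝ) (m : ℕ) (hm : 1 ≤ m)
    (η : ℝ) (hη : 0 < η) (K : ℕ)
    (hrec : ∀ k, K ≤ k →
      a (k + 1) ≤ (Finset.range m).sup'
          (Finset.nonempty_range_iff.mpr (by omega)) (fun j => a (k - j))
        - η / (k : ℝ)) :
    ¬ BddBelow (Set.range a) := by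
  -- Start at `K + 1`, where `η / k` is positive and antitone.
  have hanti : AntitoneOn (fun k : ℕ => η / (k : ℝ)) (Set.Ici (K + 1)) :=
    fun i hi _ _ hij => div_le_div_of_nonneg_left hη.le
      (Nat.cast_pos.mpr (Nat.lt_of_lt_of_le K.succ_pos hi)) (by exact_mod_cast hij)
  exact not_bddBelow_of_le_windowMax_sub (nonempty_range_iff.mpr (by omega))
    (fun k _ => by positivity) hanti (fun k hk => hrec k (by omega))
    (tendsto_sum_range_div_natCast_add_mul_atTop hη (K + 1) hm)
end
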